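/- For positive definite n×n matrices A and B and 0 ≤ t ≤ 1, d_l(A♯B, H_t(A,B)) ≤ (1/2) d_l(A,B), where H_t(A,B) = t(A♯B) + (1-t)(A+B)/2 is the weighted Heron mean and d_l is the Log-Determinant metric. -/

import Mathlib

/-!
Put `G = A ♯ B` and `D = (A + B) / 2 - G`. Writing `S = A^{1/2}` and
`R = (A^{-1/2} B A^{-1/2})^{1/2}`, one has `G = S R S`, `A = S S`, `B = S R² S`, hence
`D = ½ S (1 - R)² S ≥ 0` (matrix AM–GM). Then `H_t = G + (1 - t) D` and
`(G + H_t) / 2 = G + ((1 - t) / 2) D`. As `log det` is monotone in the Loewner order,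
`log det ((G + H_t) / 2) ≤ log det H_t ≤ log det (G + D) = log det ((A + B) / 2)`,
while `log det G = ½ (log det A + log det B)`; these two facts combine to the inequality.
-/

open Matrix ComplexOrder

/-- Matrix power via functional calculus (spectral decomposition), for Hermitian matrices. -/
noncomputable def mpow {n : Type*} [Fintype n] [DecidableEq n]
    (A : Matrix n n ℂ) (p : ℝ) : Matrix n n ℂ :=
  if hA : A.IsHermitian then
    (hA.eigenvectorUnitary : Matrix n n ℂ) *
      Matrix.diagonal (fun i => ((hA.eigenvalues i ^ p : ℝ) : ℂ)) *
      star (hA.eigenvectorUnitary : Matrix n n ℂ)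
  else 0

/-- Hellinger distance. -/
noncomputable def dh {n : Type*} [Fintype n] [DecidableEq n]
    (A B : Matrix n n ℂ) : ℝ :=
  Real.sqrt ((Matrix.trace (A + B)).re
    - 2 * (Matrix.trace (mpow A (1/2) * mpow B (1/2))).re)

/-- Bures–Wasserstein distance. -/
noncomputable def db {n : Type*} [Fintype n] [DecidableEq n]
    (A B : Matrix n n ℂ) : ℝ :=
  Real.sqrt ((Matrix.trace (A + B)).re
    - 2 * (Matrix.trace (mpow (mpow A (1/2) * B * mpow A (1/2)) (1/2))).re)

/-- Log-determinant distance. -/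
noncomputable def dl {n : Type*} [Fintype n] [DecidableEq n]
    (A B : Matrix n n ℂ) : ℝ :=
  Real.log (((A + B) / 2).det).re
    - (1/2) * (Real.log (A.det.re) + Real.log (B.det.re))

/-- Matrix power mean μ_p(t;A,B) = (t A^p + (1-t) B^p)^{1/p}. -/
noncomputable def mpm {n : Type*} [Fintype n] [DecidableEq n]
    (p t : ℝ) (A B : Matrix n n ℂ) : Matrix n n ℂ :=
  mpow ((t : ℂ) • mpow A p + ((1 - t : ℝ) : ℂ) • mpow B p) (1/p)

/-- Weighted geometric mean A ♯_t B. -/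
noncomputable def sharp {n : Type*} [Fintype n] [DecidableEq n]
    (t : ℝ) (A B : Matrix n n ℂ) : Matrix n n ℂ :=
  mpow A (1/2) * mpow (mpow A (-(1/2)) * B * mpow A (-(1/2))) t * mpow A (1/2)

/-- Quantum fidelity. -/
noncomputable def fid {n : Type*} [Fintype n] [DecidableEq n]
    (A B : Matrix n n ℂ) : ℝ :=
  ((Matrix.trace (mpow (mpow A (1/2) * B * mpow A (1/2)) (1/2))).re) ^ 2

section

variable {n : Type*} [Fintype n] [DecidableEq n] {A B D G X : Matrix n n ℂ}

lemma mpow_of_isHermitian (hX : X.IsHermitian) (p : ℝ) :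
    mpow X p = (hX.eigenvectorUnitary : Matrix n n ℂ) *
      diagonal (fun i => ((hX.eigenvalues i ^ p : ℝ) : ℂ)) *
      star (hX.eigenvectorUnitary : Matrix n n ℂ) :=
  dif_pos hX

lemma mpow_zero (hX : X.IsHermitian) : mpow X 0 = 1 := by
  simp only [mpow_of_isHermitian hX, Real.rpow_zero, Complex.ofReal_one, diagonal_one, mul_one]
  exact mem_unitaryGroup_iff.mp hX.eigenvectorUnitary.2

lemma mpow_one (hX : X.IsHermitian) : mpow X 1 = X := by
  simp only [mpow_of_isHermitian hX, Real.rpow_one]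
  exact hX.spectral_theorem.symm

lemma mpow_mul_mpow (hX : X.PosDef) (p q : ℝ) : mpow X p * mpow X q = mpow X (p + q) := by
  have hU : star (hX.1.eigenvectorUnitary : Matrix n n ℂ) * hX.1.eigenvectorUnitary = 1 :=
    mem_unitaryGroup_iff'.mp hX.1.eigenvectorUnitary.2
  simp only [mpow_of_isHermitian hX.1, mul_assoc]
  rw [← mul_assoc (star _) _, hU, one_mul, ← mul_assoc (diagonal _), diagonal_mul_diagonal]
  simp only [← Complex.ofReal_mul, ← Real.rpow_add (hX.eigenvalues_pos _)]

lemma mpow_half_mul_mpow_half (hX : X.PosDef) : mpow X (1/2) * mpow X (1/2) = X := by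
  rw [mpow_mul_mpow hX, add_halves, mpow_one hX.1]

lemma mpow_half_mul_mpow_neg_half (hX : X.PosDef) : mpow X (1/2) * mpow X (-(1/2)) = 1 := by
  rw [mpow_mul_mpow hX, add_neg_cancel, mpow_zero hX.1]

lemma mpow_neg_half_mul_mpow_half (hX : X.PosDef) : mpow X (-(1/2)) * mpow X (1/2) = 1 := by
  rw [mpow_mul_mpow hX, neg_add_cancel, mpow_zero hX.1]

lemma posDef_mpow (hX : X.PosDef) (p : ℝ) : (mpow X p).PosDef := by
  rw [mpow_of_isHermitian hX.1]
  refine (Matrix.IsUnit.posDef_star_right_conjugate_iff ?_).2 ?_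
  · exact (Unitary.toUnits hX.1.eigenvectorUnitary).isUnit
  · exact posDef_diagonal_iff.2 fun i =>
      Complex.zero_lt_real.2 (Real.rpow_pos_of_pos (hX.eigenvalues_pos i) p)

lemma det_mpow (hX : X.PosDef) (p : ℝ) : (mpow X p).det = ((X.det.re ^ p : ℝ) : ℂ) := by
  have hdet : X.det.re = ∏ i, hX.1.eigenvalues i := by
    rw [hX.1.det_eq_prod_eigenvalues]; norm_cast
  rw [mpow_of_isHermitian hX.1, det_mul_right_comm,
    mem_unitaryGroup_iff.mp hX.1.eigenvectorUnitary.2, one_mul, det_diagonal, hdet,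
    ← Real.finsetProd_rpow _ _ fun i _ => (hX.eigenvalues_pos i).le, Complex.ofReal_prod]

lemma Matrix.PosDef.re_det_pos (hX : X.PosDef) : 0 < X.det.re :=
  (Complex.pos_iff.1 hX.det_pos).1

lemma log_re_mul {z w : ℂ} (hz : 0 < z) (hw : 0 < w) :
    Real.log (z * w).re = Real.log z.re + Real.log w.re := by
  obtain ⟨hzre, hzim⟩ := Complex.pos_iff.1 hz
  rw [Complex.mul_re, ← hzim, zero_mul, sub_zero,
    Real.log_mul hzre.ne' (Complex.pos_iff.1 hw).1.ne']

lemma log_re_det_mul_mul {Y Z : Matrix n n ℂ} (hX : 0 < X.det) (hY : 0 < Y.det)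
    (hZ : 0 < Z.det) :
    Real.log (X * Y * Z).det.re = Real.log X.det.re + Real.log Y.det.re + Real.log Z.det.re := by
  rw [det_mul, det_mul, log_re_mul (mul_pos hX hY) hZ, log_re_mul hX hY]

lemma log_re_det_mpow (hX : X.PosDef) (p : ℝ) :
    Real.log (mpow X p).det.re = p * Real.log X.det.re := by
  rw [det_mpow hX, Complex.ofReal_re, Real.log_rpow hX.re_det_pos]

lemma Matrix.PosSemidef.one_le_det_one_add {Q : Matrix n n ℂ} (hQ : Q.PosSemidef) :
    1 ≤ (1 + Q).det := by
  set U : Matrix n n ℂ := (hQ.1.eigenvectorUnitary : Matrix n n ℂ)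
  have hU : U * star U = 1 := mem_unitaryGroup_iff.mp hQ.1.eigenvectorUnitary.2
  have h1Q : 1 + Q = U * (1 + diagonal (RCLike.ofReal ∘ hQ.1.eigenvalues)) * star U := by
    conv_lhs => rw [hQ.1.spectral_theorem, Unitary.conjStarAlgAut_apply]
    rw [mul_add, add_mul, mul_one, hU]
  rw [h1Q, det_mul_right_comm, hU, one_mul, ← diagonal_one, diagonal_add, det_diagonal]
  exact Finset.one_le_prod fun i _ =>
    le_add_of_nonneg_right (Complex.zero_le_real.2 (hQ.eigenvalues_nonneg i))

lemma Matrix.PosDef.det_le_det_add {P : Matrix n n ℂ} (hX : X.PosDef) (hP : P.PosSemidef) :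
    X.det ≤ (X + P).det := by
  set W := mpow X (1/2)
  set V := mpow X (-(1/2))
  have hQ : (V * P * V).PosSemidef := by
    have hV : Vᴴ = V := (posDef_mpow hX _).1.eq
    simpa only [hV] using hP.mul_mul_conjTranspose_same V
  have hXP : X + P = W * (1 + V * P * V) * W := by
    have hWV : W * V = 1 := mpow_half_mul_mpow_neg_half hX
    have hVW : V * W = 1 := mpow_neg_half_mul_mpow_half hX
    calc X + P = W * W + (W * V) * P * (V * W) := by
          rw [mpow_half_mul_mpow_half hX, hWV, hVW, one_mul, mul_one]
      _ = W * (1 + V * P * V) * W := by noncomm_ring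
  have hW : 0 ≤ W.det := (posDef_mpow hX _).posSemidef.det_nonneg
  calc X.det = W.det * 1 * W.det := by rw [← mpow_half_mul_mpow_half hX, det_mul, mul_one]
    _ ≤ W.det * (1 + V * P * V).det * W.det := by gcongr; exact hQ.one_le_det_one_add
    _ = (X + P).det := by rw [hXP, det_mul, det_mul]

lemma Matrix.PosDef.log_re_det_le_add {P : Matrix n n ℂ} (hX : X.PosDef) (hP : P.PosSemidef) :
    Real.log X.det.re ≤ Real.log (X + P).det.re :=
  Real.log_le_log hX.re_det_pos (Complex.le_def.1 (hX.det_le_det_add hP)).1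

lemma Matrix.div_two_eq_smul {R : Type*} [Field R] [NeZero (2 : R)] (M : Matrix n n R) :
    M / 2 = (2⁻¹ : R) • M := by
  rw [div_eq_mul_inv, inv_eq_left_inv (B := (2⁻¹ : R) • 1)]
  · simp
  · rw [smul_mul_assoc, one_mul]
    ext i j
    simp [ofNat_apply, one_apply, inv_mul_cancel₀ (NeZero.ne (2 : R))]

lemma Matrix.PosDef.mul_mul_same_of_posDef {S : Matrix n n ℂ} (hX : X.PosDef)
    (hS : S.PosDef) : (S * X * S).PosDef := by
  have h := (Matrix.IsUnit.posDef_star_right_conjugate_iff hS.isUnit).2 hX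
  rwa [star_eq_conjTranspose, hS.1.eq] at h

lemma posDef_mpow_neg_half_conj (hA : A.PosDef) (hB : B.PosDef) :
    (mpow A (-(1/2)) * B * mpow A (-(1/2))).PosDef :=
  hB.mul_mul_same_of_posDef (posDef_mpow hA _)

lemma posDef_sharp (hA : A.PosDef) (hB : B.PosDef) (t : ℝ) : (sharp t A B).PosDef :=
  (posDef_mpow (posDef_mpow_neg_half_conj hA hB) t).mul_mul_same_of_posDef (posDef_mpow hA _)

lemma log_re_det_sharp (hA : A.PosDef) (hB : B.PosDef) (t : ℝ) :
    Real.log (sharp t A B).det.re = (1 - t) * Real.log A.det.re + t * Real.log B.det.re := by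
  have hS := (posDef_mpow hA (1/2)).det_pos
  have hT := (posDef_mpow hA (-(1/2))).det_pos
  have hC := posDef_mpow_neg_half_conj hA hB
  rw [sharp, log_re_det_mul_mul hS (posDef_mpow hC t).det_pos hS, log_re_det_mpow hC,
    log_re_det_mul_mul hT hB.det_pos hT, log_re_det_mpow hA, log_re_det_mpow hA]
  ring

open scoped MatrixOrder in
lemma sharp_half_le_add_div_two (hA : A.PosDef) (hB : B.PosDef) :
    sharp (1/2) A B ≤ (A + B) / 2 := by
  set S := mpow A (1/2)
  set T := mpow A (-(1/2))
  set R := mpow (T * B * T) (1/2)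
  have hS : Sᴴ = S := (posDef_mpow hA _).1.eq
  have hR : Rᴴ = R := (posDef_mpow (posDef_mpow_neg_half_conj hA hB) _).1.eq
  have hSS : S * S = A := mpow_half_mul_mpow_half hA
  have hSRRS : S * (R * R) * S = B := by
    calc S * (R * R) * S = (S * T) * B * (T * S) := by
          rw [mpow_half_mul_mpow_half (posDef_mpow_neg_half_conj hA hB)]; noncomm_ring
      _ = B := by rw [mpow_half_mul_mpow_neg_half hA, mpow_neg_half_mul_mpow_half hA,
          one_mul, mul_one]
  have key : (A + B) / 2 - sharp (1/2) A B = (2⁻¹ : ℂ) • (((1 - R) * S)ᴴ * ((1 - R) * S)) := by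
    have hexpand : S * (1 - R) * ((1 - R) * S) = S * S + S * (R * R) * S - 2 • (S * R * S) := by
      noncomm_ring
    rw [conjTranspose_mul, conjTranspose_sub, conjTranspose_one, hS, hR, hexpand, hSS, hSRRS,
      div_two_eq_smul]
    show _ - S * R * S = _
    module
  rw [Matrix.le_iff, key]
  exact (posSemidef_conjTranspose_mul_self _).smul (by positivity)

lemma monotoneOn_log_re_det_add_smul (hG : G.PosDef) (hD : D.PosSemidef) :
    MonotoneOn (fun a : ℝ => Real.log (G + (a : ℂ) • D).det.re) (Set.Ici 0) := by
  intro a ha b _ hab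
  have h := (hG.add_posSemidef (hD.smul (Complex.zero_le_real.2 ha))).log_re_det_le_add
    (hD.smul (Complex.zero_le_real.2 (sub_nonneg.2 hab)))
  have hsum : G + (a : ℂ) • D + ((b - a : ℝ) : ℂ) • D = G + (b : ℂ) • D := by
    push_cast; module
  rwa [hsum] at h

lemma dl_self_add_smul_le (hG : G.PosDef) (hD : D.PosSemidef) {s : ℝ} (hs0 : 0 ≤ s)
    (hs1 : s ≤ 1) :
    dl G (G + (s : ℂ) • D) ≤ (Real.log (G + D).det.re - Real.log G.det.re) / 2 := by
  have hmono := monotoneOn_log_re_det_add_smul hG hD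
  have hmid : (G + (G + (s : ℂ) • D)) / 2 = G + ((s / 2 : ℝ) : ℂ) • D := by
    rw [div_two_eq_smul]; push_cast; module
  have h1 : Real.log (G + ((s / 2 : ℝ) : ℂ) • D).det.re ≤ Real.log (G + (s : ℂ) • D).det.re :=
    hmono (Set.mem_Ici.2 (by linarith)) (Set.mem_Ici.2 hs0) (by linarith)
  have h2 : Real.log (G + (s : ℂ) • D).det.re ≤ Real.log (G + ((1 : ℝ) : ℂ) • D).det.re :=
    hmono (Set.mem_Ici.2 hs0) (Set.mem_Ici.2 zero_le_one) hs1
  rw [Complex.ofReal_one, one_smul] at h2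
  rw [dl, hmid]
  linarith

end

theorem stmt18 {n : Type*} [Fintype n] [DecidableEq n]
    {A B : Matrix n n ℂ} (hA : A.PosDef) (hB : B.PosDef)
    {t : ℝ} (ht0 : 0 ≤ t) (ht1 : t ≤ 1) :
    dl (sharp (1/2) A B) ((t : ℂ) • sharp (1/2) A B + ((1 - t : ℝ) : ℂ) • ((A + B) / 2))
      ≤ (1/2) * dl A B := by
  set G := sharp (1/2) A B
  set D := (A + B) / 2 - G
  have hD : D.PosSemidef := Matrix.le_iff.1 (sharp_half_le_add_div_two hA hB)
  have hZ : (t : ℂ) • G + ((1 - t : ℝ) : ℂ) • ((A + B) / 2) = G + ((1 - t : ℝ) : ℂ) • D := by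
    simp only [D]; push_cast; module
  have hdlAB : dl A B = Real.log (G + D).det.re - Real.log G.det.re := by
    rw [dl, add_sub_cancel, log_re_det_sharp hA hB]; ring
  have hray := dl_self_add_smul_le (posDef_sharp hA hB (1/2)) hD (s := 1 - t)
    (by linarith) (by linarith)
  rw [hZ, hdlAB]
  linarith
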